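/- arXiv:1011.0305 — 3 statements merged into one kernel-verified Lean document; each statement's English description precedes it below -/
import Mathlib

section
/- The image of θ is exactly the k-subalgebra of k[x₀,x₁,x₂] spanned by all monomials of even total degree; equivalently, a polynomial lies in Im(θ) if and only if every monomial appearing in it has even total degree. -/
/-!
A polynomial whose monomials all have even degree forms a subalgebra, and it contains every
generator `xᵢxⱼ` of the image of `θ`. Conversely, an even-degree monomial is a product of
monomials `xᵢxⱼ`, obtained by peeling its variables off in pairs, and every such product lies
in the image of `θ`.
-/

open MvPolynomial

noncomputable def theta (k : Type*) [CommRing k] :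
    MvPolynomial (Fin 6) k →ₐ[k] MvPolynomial (Fin 3) k :=
  MvPolynomial.aeval
    ![X 0 * X 0, X 0 * X 1, X 0 * X 2, X 1 * X 1, X 1 * X 2, X 2 * X 2]

namespace MvPolynomial

variable (σ R : Type*) [CommSemiring R]

noncomputable def evenDegreeSubalgebra : Subalgebra R (MvPolynomial σ R) where
  carrier := {p | ∀ d ∈ p.support, Even d.degree}
  mul_mem' {p q} hp hq d hd := by
    classical
    obtain ⟨a, ha, b, hb, rfl⟩ := Finset.mem_add.mp (support_mul p q hd)
    simpa only [map_add] using (hp a ha).add (hq b hb)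
  add_mem' hp hq d hd := by
    classical
    exact (Finset.mem_union.mp (support_add hd)).elim (hp d) (hq d)
  algebraMap_mem' c d hd := by
    rw [algebraMap_eq, C_apply] at hd
    rw [Finset.mem_singleton.mp (support_monomial_subset hd), map_zero]
    exact Even.zero

variable {σ R}

theorem mem_evenDegreeSubalgebra {p : MvPolynomial σ R} :
    p ∈ evenDegreeSubalgebra σ R ↔ ∀ d ∈ p.support, Even d.degree :=
  Iff.rfl

theorem monomial_mem_evenDegreeSubalgebra {d : σ →₀ ℕ} (hd : Even d.degree) (c : R) :
    monomial d c ∈ evenDegreeSubalgebra σ R := by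
  rintro e he
  rwa [Finset.mem_singleton.mp (support_monomial_subset he)]

theorem X_mul_X_mem_evenDegreeSubalgebra (i j : σ) :
    X i * X j ∈ evenDegreeSubalgebra σ R := by
  rw [X, X, monomial_mul, one_mul]
  exact monomial_mem_evenDegreeSubalgebra (by simp) 1

-- The odd case is carried along so that the induction can add one variable at a time.
theorem monomial_toFinsupp_mem_adjoin_X_mul_X [DecidableEq σ] (s : Multiset σ) :
    (Even (Multiset.card s) → monomial (Multiset.toFinsupp s) (1 : R) ∈
        Algebra.adjoin R (Set.range fun ij : σ × σ => X ij.1 * X ij.2)) ∧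
      (Odd (Multiset.card s) → ∀ j, monomial (Multiset.toFinsupp s) (1 : R) * X j ∈
        Algebra.adjoin R (Set.range fun ij : σ × σ => X ij.1 * X ij.2)) := by
  induction s using Multiset.induction_on with
  | empty => simp
  | cons i s ih =>
    have hmon : monomial (Multiset.toFinsupp (i ::ₘ s)) (1 : R) =
        X i * monomial (Multiset.toFinsupp s) 1 := by
      rw [← Multiset.singleton_add, map_add, Multiset.toFinsupp_singleton, monomial_single_add,
        pow_one]
    rw [hmon, Multiset.card_cons, Nat.even_add_one, Nat.odd_add_one, Nat.not_even_iff_odd]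
    refine ⟨fun hs => ?_, fun hs j => ?_⟩
    · rw [mul_comm]
      exact ih.2 hs i
    · rw [mul_comm (X i), mul_assoc]
      exact mul_mem (ih.1 (Nat.not_odd_iff_even.mp hs)) (Algebra.subset_adjoin ⟨(i, j), rfl⟩)

theorem monomial_one_mem_adjoin_X_mul_X {d : σ →₀ ℕ} (hd : Even d.degree) :
    monomial d (1 : R) ∈ Algebra.adjoin R (Set.range fun ij : σ × σ => X ij.1 * X ij.2) := by
  classical
  have h := (monomial_toFinsupp_mem_adjoin_X_mul_X (R := R) (Finsupp.toMultiset d)).1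
  rw [Finsupp.toMultiset_toFinsupp, Finsupp.card_toMultiset] at h
  exact h hd

theorem evenDegreeSubalgebra_eq_adjoin_X_mul_X :
    evenDegreeSubalgebra σ R = Algebra.adjoin R (Set.range fun ij : σ × σ => X ij.1 * X ij.2) := by
  refine le_antisymm (fun p hp => ?_) (Algebra.adjoin_le ?_)
  · rw [p.as_sum]
    refine sum_mem fun d hd => ?_
    rw [← mul_one (coeff d p), ← smul_eq_mul, ← smul_monomial]
    exact Subalgebra.smul_mem _ (monomial_one_mem_adjoin_X_mul_X (hp d hd)) _
  · rintro _ ⟨⟨i, j⟩, rfl⟩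
    exact X_mul_X_mem_evenDegreeSubalgebra i j

end MvPolynomial

theorem range_theta_eq_adjoin_X_mul_X (k : Type*) [CommRing k] :
    (theta k).range = Algebra.adjoin k (Set.range fun ij : Fin 3 × Fin 3 => X ij.1 * X ij.2) := by
  rw [theta, ← Algebra.adjoin_range_eq_range_aeval]
  refine le_antisymm (Algebra.adjoin_mono ?_) (Algebra.adjoin_le ?_)
  · rintro _ ⟨m, rfl⟩
    fin_cases m <;> exact ⟨(_, _), rfl⟩
  · rintro _ ⟨⟨i, j⟩, rfl⟩
    fin_cases i <;> fin_cases j <;> exact Algebra.subset_adjoin (by simp <;> grind)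

/-- The image of θ is exactly the span of monomials of even total degree:
a polynomial lies in the image iff every monomial appearing in it has even total degree. -/
theorem range_theta_eq_even_monomials (k : Type*) [Field k]
    (f : MvPolynomial (Fin 3) k) :
    f ∈ (theta k).range ↔ ∀ d ∈ f.support, Even (∑ i : Fin 3, d i) := by
  rw [range_theta_eq_adjoin_X_mul_X, ← evenDegreeSubalgebra_eq_adjoin_X_mul_X,
    mem_evenDegreeSubalgebra]
  simp only [Finsupp.degree_eq_sum]
end

section
/- The matrix M₃ in the resolution of the Veronese surface has trivial kernel: if (c₁,c₂,c₃) ∈ S³ satisfies M₃·(c₁,c₂,c₃)ᵀ = 0, then c₁ = c₂ = c₃ = 0. -/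
open MvPolynomial

noncomputable def M3 (k : Type*) [CommRing k] :
    Matrix (Fin 8) (Fin 3) (MvPolynomial (Fin 6) k) :=
  !![X 1,   X 0,   0;
     -X 3,  -X 1,  0;
     -X 2,  0,     X 0;
     X 4,   X 2,   0;
     -X 5,  0,     X 2;
     0,     -X 2,  -X 1;
     0,     X 4,   X 3;
     0,     -X 5,  -X 4]

theorem M3_trivial_kernel (k : Type*) [Field k]
    (c : Fin 3 → MvPolynomial (Fin 6) k)
    (hc : (M3 k).mulVec c = 0) : c = 0 := by
  have h0 := congrFun hc 0
  have h1 := congrFun hc 1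
  have h2 := congrFun hc 2
  simp [M3, Matrix.mulVec, dotProduct, Fin.sum_univ_three,
    show (2:Fin 3) = ⟨2, by norm_num⟩ from rfl] at h0 h1 h2
  have key : (X 1 * X 1 - X 0 * X 3 : MvPolynomial (Fin 6) k) * c 1 = 0 := by
    linear_combination (-(X 3 : MvPolynomial (Fin 6) k)) * h0 + (-(X 1 : MvPolynomial (Fin 6) k)) * h1
  have hq : (X 1 * X 1 - X 0 * X 3 : MvPolynomial (Fin 6) k) ≠ 0 := by
    intro h
    have := congrArg (eval (fun i : Fin 6 => if i = 1 then (1 : k) else 0)) h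
    simp at this
  have hc1 : c 1 = 0 := by
    rcases mul_eq_zero.mp key with h | h
    · exact absurd h hq
    · exact h
  rw [hc1] at h0
  have hc0 : c 0 = 0 := by
    have : (X 1 : MvPolynomial (Fin 6) k) * c 0 = 0 := by
      linear_combination h0
    rcases mul_eq_zero.mp this with h | h
    · exact absurd h (X_ne_zero 1)
    · exact h
  rw [hc0] at h2
  have hc2 : c 2 = 0 := by
    have : (X 0 : MvPolynomial (Fin 6) k) * c 2 = 0 := by
      linear_combination h2
    rcases mul_eq_zero.mp this with h | h
    · exact absurd h (X_ne_zero 0)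
    · exact h
  funext i
  fin_cases i <;> simp [hc0, hc1, hc2]
end

section
/- Suppose M₁M₂ = 0, M₂M₃ = 0, ker(M₃) = 0 (as a map S³ → S⁸), the columns of M₂ generate the syzygies of M₁, the columns of M₃ generate the syzygies of M₂, and F is a nonzerodivisor on S/(image of M₁ᵀ). Then the complex 0 → S³ → S³⊕S⁸ → S⁸⊕S⁶ → S⁶⊕S → S given by M′₄, M′₃, M′₂, M′₁ (as in the paper's Theorem 4) is exact at every spot except the rightmost. -/
/-!
Exactness of the mapping cone of multiplication by `F` on the resolution is a diagram chase.
A cycle `(a, b)` of the cone has `b` a cycle of the resolution one step down; exactness there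
writes `b = M d`, after which `a ∓ F d` is a cycle of the resolution, hence a boundary. At the
right end `b` is only known to satisfy `F b ∈ im M₁`, and regularity of `F` on `coker M₁ = S ⧸ I`
is what gives `b ∈ im M₁`.
-/

/-- Mapping-cone block matrices associated to multiplication by `F`. -/
noncomputable def M'1 {S : Type*} [CommRing S] (F : S)
    (M1 : Matrix (Fin 1) (Fin 6) S) : Matrix (Fin 1) (Fin 6 ⊕ Fin 1) S :=
  Matrix.fromCols M1 (F • (1 : Matrix (Fin 1) (Fin 1) S))

noncomputable def M'2 {S : Type*} [CommRing S] (F : S)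
    (M1 : Matrix (Fin 1) (Fin 6) S) (M2 : Matrix (Fin 6) (Fin 8) S) :
    Matrix (Fin 6 ⊕ Fin 1) (Fin 8 ⊕ Fin 6) S :=
  Matrix.fromBlocks M2 (-(F • (1 : Matrix (Fin 6) (Fin 6) S))) 0 M1

noncomputable def M'3 {S : Type*} [CommRing S] (F : S)
    (M2 : Matrix (Fin 6) (Fin 8) S) (M3 : Matrix (Fin 8) (Fin 3) S) :
    Matrix (Fin 8 ⊕ Fin 6) (Fin 3 ⊕ Fin 8) S :=
  Matrix.fromBlocks M3 (F • (1 : Matrix (Fin 8) (Fin 8) S)) 0 M2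

noncomputable def M'4 {S : Type*} [CommRing S] (F : S)
    (M3 : Matrix (Fin 8) (Fin 3) S) : Matrix (Fin 3 ⊕ Fin 8) (Fin 3) S :=
  Matrix.fromRows (-(F • (1 : Matrix (Fin 3) (Fin 3) S))) M3

open Matrix

theorem fromBlocks_mulVec_sumElim {R l m n o : Type*} [Semiring R] [Fintype l] [Fintype m]
    (A : Matrix n l R) (B : Matrix n m R) (C : Matrix o l R) (D : Matrix o m R)
    (x : l → R) (y : m → R) :
    fromBlocks A B C D *ᵥ (x ⊕ᵥ y) = (A *ᵥ x + B *ᵥ y) ⊕ᵥ (C *ᵥ x + D *ᵥ y) := by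
  rw [fromBlocks_mulVec, Sum.elim_comp_inl, Sum.elim_comp_inr]

theorem smul_one_mulVec {R n : Type*} [Semiring R] [Fintype n] [DecidableEq n] (F : R)
    (v : n → R) : (F • (1 : Matrix n n R)) *ᵥ v = F • v := by
  rw [smul_mulVec, one_mulVec]

theorem mem_range_mulVecLin_iff_mem_span {S ι₀ ι₁ : Type*} [CommSemiring S] [Unique ι₀] [Fintype ι₁]
    (M : Matrix ι₀ ι₁ S) (x : ι₀ → S) :
    x ∈ LinearMap.range M.mulVecLin ↔ x default ∈ Ideal.span (Set.range (M default)) := by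
  simp [Ideal.mem_span_range_iff_exists_fun, funext_iff, Unique.forall_iff, mulVec, dotProduct,
    mul_comm]

section MappingCone

variable {S : Type*} [CommRing S] {ι₀ ι₁ ι₂ ι₃ : Type*}
  (F : S) {M₁ : Matrix ι₀ ι₁ S} {M₂ : Matrix ι₁ ι₂ S} {M₃ : Matrix ι₂ ι₃ S}

theorem exists_eq_fromRows_mulVec_of_fromBlocks_mulVec_eq_zero
    [Fintype ι₂] [Fintype ι₃] [DecidableEq ι₂] [DecidableEq ι₃]
    (hker₃ : ∀ c, M₃ *ᵥ c = 0 → c = 0) (hsyz₂ : ∀ v, M₂ *ᵥ v = 0 → ∃ c, v = M₃ *ᵥ c)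
    (v : ι₃ ⊕ ι₂ → S) (hv : fromBlocks M₃ (F • 1) 0 M₂ *ᵥ v = 0) :
    ∃ w, v = fromRows (-(F • 1)) M₃ *ᵥ w := by
  obtain ⟨a, b, rfl⟩ : ∃ a b, v = a ⊕ᵥ b := ⟨_, _, (Sum.elim_comp_inl_inr v).symm⟩
  rw [fromBlocks_mulVec_sumElim, smul_one_mulVec, zero_mulVec, zero_add, ← Sum.elim_zero_zero,
    Sum.elim_eq_iff] at hv
  obtain ⟨hcycle, hb⟩ := hv
  obtain ⟨c, rfl⟩ := hsyz₂ b hb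
  have ha : a = -(F • c) :=
    eq_neg_of_add_eq_zero_left (hker₃ _ (by rwa [mulVec_add, mulVec_smul]))
  exact ⟨c, by rw [fromRows_mulVec, neg_mulVec, smul_one_mulVec, ha]⟩

theorem exists_eq_fromBlocks_mulVec_of_fromBlocks_mulVec_eq_zero
    [Fintype ι₁] [Fintype ι₂] [Fintype ι₃] [DecidableEq ι₁] [DecidableEq ι₂]
    (hsyz₁ : ∀ v, M₁ *ᵥ v = 0 → ∃ c, v = M₂ *ᵥ c) (hsyz₂ : ∀ v, M₂ *ᵥ v = 0 → ∃ c, v = M₃ *ᵥ c)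
    (v : ι₂ ⊕ ι₁ → S) (hv : fromBlocks M₂ (-(F • 1)) 0 M₁ *ᵥ v = 0) :
    ∃ w, v = fromBlocks M₃ (F • 1) 0 M₂ *ᵥ w := by
  obtain ⟨a, b, rfl⟩ : ∃ a b, v = a ⊕ᵥ b := ⟨_, _, (Sum.elim_comp_inl_inr v).symm⟩
  rw [fromBlocks_mulVec_sumElim, neg_mulVec, smul_one_mulVec, zero_mulVec, zero_add,
    ← Sum.elim_zero_zero, Sum.elim_eq_iff] at hv
  obtain ⟨hcycle, hb⟩ := hv
  obtain ⟨d, rfl⟩ := hsyz₁ b hb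
  obtain ⟨c, hc⟩ := hsyz₂ (a - F • d) (by rwa [mulVec_sub, mulVec_smul, sub_eq_add_neg])
  refine ⟨c ⊕ᵥ d, ?_⟩
  rw [fromBlocks_mulVec_sumElim, smul_one_mulVec, zero_mulVec, zero_add, ← hc, sub_add_cancel]

theorem exists_eq_fromBlocks_mulVec_of_fromCols_mulVec_eq_zero
    [Fintype ι₀] [Fintype ι₁] [Fintype ι₂] [DecidableEq ι₀] [DecidableEq ι₁]
    (hF : IsSMulRegular ((ι₀ → S) ⧸ LinearMap.range M₁.mulVecLin) F)
    (hsyz₁ : ∀ v, M₁ *ᵥ v = 0 → ∃ c, v = M₂ *ᵥ c)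
    (v : ι₁ ⊕ ι₀ → S) (hv : fromCols M₁ (F • 1) *ᵥ v = 0) :
    ∃ w, v = fromBlocks M₂ (-(F • 1)) 0 M₁ *ᵥ w := by
  obtain ⟨a, b, rfl⟩ : ∃ a b, v = a ⊕ᵥ b := ⟨_, _, (Sum.elim_comp_inl_inr v).symm⟩
  rw [fromCols_mulVec_sumElim, smul_one_mulVec] at hv
  obtain ⟨d, rfl⟩ : ∃ d, M₁ *ᵥ d = b :=
    (isSMulRegular_quotient_iff_mem_of_smul_mem _ F).1 hF b
      ⟨-a, by rw [mulVecLin_apply, mulVec_neg, eq_neg_of_add_eq_zero_right hv]⟩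
  obtain ⟨c, hc⟩ := hsyz₁ (a + F • d) (by rwa [mulVec_add, mulVec_smul])
  refine ⟨c ⊕ᵥ d, ?_⟩
  rw [fromBlocks_mulVec_sumElim, neg_mulVec, smul_one_mulVec, zero_mulVec, zero_add, ← hc,
    add_neg_cancel_right]

end MappingCone

theorem mapping_cone_exact_general {S : Type*} [CommRing S] (F : S)
    (M1 : Matrix (Fin 1) (Fin 6) S) (M2 : Matrix (Fin 6) (Fin 8) S)
    (M3 : Matrix (Fin 8) (Fin 3) S)
    (hker3 : ∀ c : Fin 3 → S, M3.mulVec c = 0 → c = 0)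
    (hsyz1 : ∀ v : Fin 6 → S, M1.mulVec v = 0 → ∃ c : Fin 8 → S, v = M2.mulVec c)
    (hsyz2 : ∀ v : Fin 8 → S, M2.mulVec v = 0 → ∃ c : Fin 3 → S, v = M3.mulVec c)
    (hF : ∀ x : S, F * x ∈ Ideal.span (Set.range fun j => M1 0 j) →
      x ∈ Ideal.span (Set.range fun j => M1 0 j)) :
    (∀ w : Fin 3 → S, (M'4 F M3).mulVec w = 0 → w = 0) ∧
    (∀ v : Fin 3 ⊕ Fin 8 → S, (M'3 F M2 M3).mulVec v = 0 →
      ∃ w : Fin 3 → S, v = (M'4 F M3).mulVec w) ∧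
    (∀ v : Fin 8 ⊕ Fin 6 → S, (M'2 F M1 M2).mulVec v = 0 →
      ∃ w : Fin 3 ⊕ Fin 8 → S, v = (M'3 F M2 M3).mulVec w) ∧
    (∀ v : Fin 6 ⊕ Fin 1 → S, (M'1 F M1).mulVec v = 0 →
      ∃ w : Fin 8 ⊕ Fin 6 → S, v = (M'2 F M1 M2).mulVec w) := by
  have hreg : IsSMulRegular ((Fin 1 → S) ⧸ LinearMap.range M1.mulVecLin) F :=
    (isSMulRegular_quotient_iff_mem_of_smul_mem _ F).2 fun x hx => by
      rw [mem_range_mulVecLin_iff_mem_span] at hx ⊢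
      exact hF _ hx
  refine ⟨fun w hw => hker3 w ?_,
    exists_eq_fromRows_mulVec_of_fromBlocks_mulVec_eq_zero F hker3 hsyz2,
    exists_eq_fromBlocks_mulVec_of_fromBlocks_mulVec_eq_zero F hsyz1 hsyz2,
    exists_eq_fromBlocks_mulVec_of_fromCols_mulVec_eq_zero F hreg hsyz1⟩
  rw [M'4, fromRows_mulVec, ← Sum.elim_zero_zero, Sum.elim_eq_iff] at hw
  exact hw.2

theorem mapping_cone_exact {S : Type*} [CommRing S] [IsNoetherianRing S] (F : S)
    (M1 : Matrix (Fin 1) (Fin 6) S) (M2 : Matrix (Fin 6) (Fin 8) S)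
    (M3 : Matrix (Fin 8) (Fin 3) S)
    (h12 : M1 * M2 = 0) (h23 : M2 * M3 = 0)
    (hker3 : ∀ c : Fin 3 → S, M3.mulVec c = 0 → c = 0)
    (hsyz1 : ∀ v : Fin 6 → S, M1.mulVec v = 0 → ∃ c : Fin 8 → S, v = M2.mulVec c)
    (hsyz2 : ∀ v : Fin 8 → S, M2.mulVec v = 0 → ∃ c : Fin 3 → S, v = M3.mulVec c)
    (hF : ∀ x : S, F * x ∈ Ideal.span (Set.range fun j => M1 0 j) →
      x ∈ Ideal.span (Set.range fun j => M1 0 j)) :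
    (∀ w : Fin 3 → S, (M'4 F M3).mulVec w = 0 → w = 0) ∧
    (∀ v : Fin 3 ⊕ Fin 8 → S, (M'3 F M2 M3).mulVec v = 0 →
      ∃ w : Fin 3 → S, v = (M'4 F M3).mulVec w) ∧
    (∀ v : Fin 8 ⊕ Fin 6 → S, (M'2 F M1 M2).mulVec v = 0 →
      ∃ w : Fin 3 ⊕ Fin 8 → S, v = (M'3 F M2 M3).mulVec w) ∧
    (∀ v : Fin 6 ⊕ Fin 1 → S, (M'1 F M1).mulVec v = 0 →
      ∃ w : Fin 8 ⊕ Fin 6 → S, v = (M'2 F M1 M2).mulVec w) :=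
  mapping_cone_exact_general F M1 M2 M3 hker3 hsyz1 hsyz2 hF
end
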